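/- arXiv:1812.00613 — 3 statements merged into one kernel-verified Lean document; each statement's English description precedes it below -/
import Mathlib

section
/- (Gronwall-type lemma.) Let S > 0, a ≥ 0 and b > 0, and let v : [0,S] → ℝ be a nonnegative continuous function. Suppose there is a Lebesgue-integrable function w on [0,S] such that v(t)² = v(0)² + ∫₀ᵗ w(s) ds for every t ∈ [0,S] and w(s) ≤ 2( a v(s) − b v(s)² ) for almost every s ∈ [0,S]. Then for every t ∈ [0,S], v(t) ≤ e^{−bt} v(0) + (a/b)(1 − e^{−bt}). -/
/-!
Compare `v` with the solution `φ` of `φ' = a - b φ` started strictly above `v 0`. Since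
`(φ²)' = 2 (a φ - b φ²)`, on any interval where `v ≤ φ` the function `g = φ² - v²` satisfies
`g r ≤ g t + 2b ∫ᵣᵗ g`: the term `a v` is dominated by `a φ`, and the `b`-terms differ by
`2b g`. Such a backward integral inequality forbids a first zero of `g`, so `v < φ` on `[0, S]`;
letting the starting value of `φ` decrease to `v 0` gives the bound.
-/

open Set MeasureTheory Filter Topology

noncomputable def relaxationCurve (a b c t : ℝ) : ℝ :=
  Real.exp (-b * t) * c + a / b * (1 - Real.exp (-b * t))

section RelaxationCurve

variable {a b c : ℝ}

theorem continuous_relaxationCurve : Continuous (relaxationCurve a b c) := by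
  unfold relaxationCurve
  fun_prop

theorem hasDerivAt_relaxationCurve (hb : b ≠ 0) (t : ℝ) :
    HasDerivAt (relaxationCurve a b c) (a - b * relaxationCurve a b c t) t := by
  have hexp : HasDerivAt (fun t => Real.exp (-b * t)) (Real.exp (-b * t) * -b) t := by
    simpa using ((hasDerivAt_id t).const_mul (-b)).exp
  refine ((hexp.mul_const c).add ((hexp.const_sub 1).const_mul (a / b))).congr_deriv ?_
  unfold relaxationCurve
  field_simp
  ring

theorem sq_relaxationCurve_sub_sq (hb : b ≠ 0) (r t : ℝ) :
    relaxationCurve a b c t ^ 2 - relaxationCurve a b c r ^ 2 =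
      ∫ s in r..t, 2 * (a * relaxationCurve a b c s - b * relaxationCurve a b c s ^ 2) := by
  have hderiv : ∀ s, HasDerivAt (fun s => relaxationCurve a b c s ^ 2)
      (2 * (a * relaxationCurve a b c s - b * relaxationCurve a b c s ^ 2)) s := fun s =>
    ((hasDerivAt_relaxationCurve hb s).pow 2).congr_deriv (by ring)
  have hcont : Continuous (relaxationCurve a b c) := continuous_relaxationCurve
  exact (intervalIntegral.integral_eq_sub_of_hasDerivAt (fun s _ => hderiv s)
    ((by fun_prop : Continuous _).intervalIntegrable r t)).symm

theorem relaxationCurve_zero : relaxationCurve a b c 0 = c := by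
  simp [relaxationCurve]

theorem relaxationCurve_nonneg (ha : 0 ≤ a) (hb : 0 ≤ b) (hc : 0 ≤ c) {t : ℝ} (ht : 0 ≤ t) :
    0 ≤ relaxationCurve a b c t := by
  have hexp : Real.exp (-b * t) ≤ 1 := Real.exp_le_one_iff.2 (by nlinarith)
  unfold relaxationCurve
  have := div_nonneg ha hb
  positivity

theorem relaxationCurve_add_le (hb : 0 ≤ b) {t ε : ℝ} (ht : 0 ≤ t) (hε : 0 ≤ ε) :
    relaxationCurve a b (c + ε) t ≤ relaxationCurve a b c t + ε := by
  have hexp : Real.exp (-b * t) ≤ 1 := Real.exp_le_one_iff.2 (by nlinarith)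
  simp only [relaxationCurve]
  nlinarith

end RelaxationCurve

theorem exists_first_zero {g : ℝ → ℝ} {a b : ℝ} (hg : ContinuousOn g (Icc a b)) (ha : 0 < g a)
    (h : ∃ t ∈ Icc a b, g t ≤ 0) :
    ∃ T, a < T ∧ T ≤ b ∧ g T = 0 ∧ ∀ x ∈ Ico a T, 0 < g x := by
  set B := Icc a b ∩ g ⁻¹' Iic 0
  have hBbdd : BddBelow B := ⟨a, fun x hx => hx.1.1⟩
  have hTB : sInf B ∈ B :=
    (hg.preimage_isClosed_of_isClosed isClosed_Icc isClosed_Iic).csInf_mem h hBbdd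
  set T := sInf B
  have hpos : ∀ x ∈ Ico a T, 0 < g x := fun x hx => by
    by_contra! hgx
    exact hx.2.not_ge (csInf_le hBbdd ⟨⟨hx.1, hx.2.le.trans hTB.1.2⟩, hgx⟩)
  have haT : a < T := hTB.1.1.lt_of_ne fun haT => by
    have : g T ≤ 0 := hTB.2
    rw [← haT] at this
    linarith
  obtain ⟨x, hx, hgx⟩ := intermediate_value_Icc' haT.le
    (hg.mono (Icc_subset_Icc_right hTB.1.2)) ⟨hTB.2, ha.le⟩
  obtain rfl : x = T := by
    by_contra hxT
    exact (hpos x ⟨hx.1, hx.2.lt_of_ne hxT⟩).ne' hgx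
  exact ⟨_, haT, hTB.1.2, hgx, hpos⟩

theorem pos_of_le_add_mul_integral {g : ℝ → ℝ} {a b K : ℝ} (hK : 0 ≤ K)
    (hg : ContinuousOn g (Icc a b)) (ha : 0 < g a)
    (hle : ∀ r t, a ≤ r → r ≤ t → t ≤ b → (∀ x ∈ Icc r t, 0 ≤ g x) →
      g r ≤ g t + K * ∫ x in r..t, g x) :
    ∀ t ∈ Icc a b, 0 < g t := by
  by_contra! hneg
  obtain ⟨T, haT, hTb, hgT, hpos⟩ := exists_first_zero hg ha hneg
  -- On `[s, T]` with `K (T - s) < 1`, the hypothesis at a maximum point `ρ` of `g` gives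
  -- `g ρ ≤ K (T - ρ) g ρ < g ρ`.
  obtain ⟨s, hKs, has, hsT⟩ : ∃ s, K * (T - s) < 1 ∧ s ∈ Ico a T := by
    have hlim : Tendsto (fun s => K * (T - s)) (𝓝[<] T) (𝓝 0) := by
      have : Tendsto (fun s => K * (T - s)) (𝓝 T) (𝓝 (K * (T - T))) :=
        (continuous_const.mul (continuous_const.sub continuous_id)).tendsto T
      simpa using this.mono_left nhdsWithin_le_nhds
    exact ((hlim.eventually (gt_mem_nhds zero_lt_one)).and (Ico_mem_nhdsLT haT)).exists
  obtain ⟨ρ, hρ, hmax⟩ := isCompact_Icc.exists_isMaxOn (nonempty_Icc.2 hsT.le)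
    (hg.mono (Icc_subset_Icc has hTb))
  have hgρ : 0 < g ρ := (hpos s ⟨has, hsT⟩).trans_le (hmax ⟨le_rfl, hsT.le⟩)
  have hnonneg : ∀ x ∈ Icc ρ T, 0 ≤ g x := fun x hx => by
    rcases hx.2.lt_or_eq with hxT | rfl
    · exact (hpos x ⟨has.trans (hρ.1.trans hx.1), hxT⟩).le
    · exact hgT.ge
  have hint : ∫ x in ρ..T, g x ≤ (T - ρ) * g ρ := by
    calc ∫ x in ρ..T, g x ≤ ∫ _ in ρ..T, g ρ :=
          intervalIntegral.integral_mono_on hρ.2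
            ((hg.mono (Icc_subset_Icc (has.trans hρ.1) hTb)).intervalIntegrable_of_Icc hρ.2)
            intervalIntegrable_const fun x hx => hmax ⟨hρ.1.trans hx.1, hx.2⟩
      _ = (T - ρ) * g ρ := by simp
  have hρT := hle ρ T (has.trans hρ.1) hρ.2 hTb hnonneg
  rw [hgT, zero_add] at hρT
  refine lt_irrefl (g ρ) ?_
  calc g ρ ≤ K * ((T - ρ) * g ρ) := hρT.trans (mul_le_mul_of_nonneg_left hint hK)
    _ ≤ K * (T - s) * g ρ := by
        rw [← mul_assoc]
        gcongr
        exact hρ.1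
    _ < g ρ := mul_lt_of_lt_one_left hgρ hKs

theorem sub_le_integral_of_eq_add_integral {a b : ℝ} {u w f : ℝ → ℝ}
    (hw : IntegrableOn w (Icc a b)) (hf : IntegrableOn f (Icc a b))
    (hu : ∀ t ∈ Icc a b, u t = u a + ∫ s in a..t, w s)
    (hwf : ∀ᵐ s ∂volume.restrict (Icc a b), w s ≤ f s)
    {r t : ℝ} (har : a ≤ r) (hrt : r ≤ t) (htb : t ≤ b) :
    u t - u r ≤ ∫ s in r..t, f s := by
  have hII : ∀ {g : ℝ → ℝ}, IntegrableOn g (Icc a b) → ∀ {p q}, a ≤ p → p ≤ q → q ≤ b →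
      IntervalIntegrable g volume p q := fun hg _ _ hp hpq hq =>
    (intervalIntegrable_iff_integrableOn_Icc_of_le hpq).2 (hg.mono_set (Icc_subset_Icc hp hq))
  have hat : a ≤ t := har.trans hrt
  calc u t - u r = ∫ s in r..t, w s := by
        rw [hu t ⟨hat, htb⟩, hu r ⟨har, hrt.trans htb⟩, add_sub_add_left_eq_sub,
          intervalIntegral.integral_interval_sub_left (hII hw le_rfl hat htb)
            (hII hw le_rfl har (hrt.trans htb))]
    _ ≤ ∫ s in r..t, f s :=
        intervalIntegral.integral_mono_ae_restrict hrt (hII hw har hrt htb) (hII hf har hrt htb)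
          (ae_restrict_of_ae_restrict_of_subset (Icc_subset_Icc har htb) hwf)

theorem lt_relaxationCurve {S a b c : ℝ} {v : ℝ → ℝ} (ha : 0 ≤ a) (hb : 0 < b)
    (hv : ContinuousOn v (Icc 0 S)) (hvnn : ∀ t ∈ Icc 0 S, 0 ≤ v t) (hc : v 0 < c)
    (hsq : ∀ r t, 0 ≤ r → r ≤ t → t ≤ S →
      v t ^ 2 - v r ^ 2 ≤ ∫ s in r..t, 2 * (a * v s - b * v s ^ 2)) :
    ∀ t ∈ Icc 0 S, v t < relaxationCurve a b c t := by
  intro t ht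
  have hv0 : 0 ≤ v 0 := hvnn 0 ⟨le_rfl, ht.1.trans ht.2⟩
  have hφnn : ∀ x, 0 ≤ x → 0 ≤ relaxationCurve a b c x :=
    fun x hx => relaxationCurve_nonneg ha hb.le (hv0.trans hc.le) hx
  have hφ : Continuous (relaxationCurve a b c) := continuous_relaxationCurve
  suffices hg : ∀ t ∈ Icc 0 S, 0 < relaxationCurve a b c t ^ 2 - v t ^ 2 from
    lt_of_pow_lt_pow_left₀ 2 (hφnn t ht.1) (sub_pos.1 (hg t ht))
  refine pos_of_le_add_mul_integral (mul_nonneg zero_le_two hb.le)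
    ((hφ.continuousOn.pow 2).sub (hv.pow 2)) ?_ fun p q hp hpq hqS hg => ?_
  · rw [sub_pos, relaxationCurve_zero]
    exact pow_lt_pow_left₀ hc hv0 two_ne_zero
  have hpqS : Icc p q ⊆ Icc 0 S := Icc_subset_Icc hp hqS
  have hvφ : ∀ x ∈ Icc p q, v x ≤ relaxationCurve a b c x := fun x hx =>
    (pow_le_pow_iff_left₀ (hvnn x (hpqS hx)) (hφnn x (hp.trans hx.1)) two_ne_zero).1
      (sub_nonneg.1 (hg x hx))
  have hvpq : ContinuousOn v (Icc p q) := hv.mono hpqS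
  have hφpq : ContinuousOn (relaxationCurve a b c) (Icc p q) := hφ.continuousOn
  have hcomp : ∫ x in p..q, 2 * (a * v x - b * v x ^ 2) ≤
      ∫ x in p..q, (2 * (a * relaxationCurve a b c x - b * relaxationCurve a b c x ^ 2) +
        2 * b * (relaxationCurve a b c x ^ 2 - v x ^ 2)) := by
    refine intervalIntegral.integral_mono_on hpq
      ((by fun_prop : ContinuousOn _ _).intervalIntegrable_of_Icc hpq)
      ((by fun_prop : ContinuousOn _ _).intervalIntegrable_of_Icc hpq) fun x hx => ?_
    nlinarith [mul_le_mul_of_nonneg_left (hvφ x hx) ha]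
  rw [intervalIntegral.integral_add
    ((by fun_prop : ContinuousOn _ _).intervalIntegrable_of_Icc hpq)
    ((by fun_prop : ContinuousOn _ _).intervalIntegrable_of_Icc hpq),
    intervalIntegral.integral_const_mul (2 * b)] at hcomp
  linarith [hsq p q hp hpq hqS, sq_relaxationCurve_sub_sq (a := a) (c := c) hb.ne' p q]

theorem gronwall_type_general (S a b : ℝ) (ha : 0 ≤ a) (hb : 0 < b)
    (v : ℝ → ℝ) (hv : ContinuousOn v (Icc 0 S)) (hvnn : ∀ t ∈ Icc (0:ℝ) S, 0 ≤ v t)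
    (w : ℝ → ℝ) (hw : IntegrableOn w (Icc 0 S))
    (heq : ∀ t ∈ Icc (0:ℝ) S, v t ^ 2 = v 0 ^ 2 + ∫ s in (0:ℝ)..t, w s)
    (hle : ∀ᵐ s ∂(volume.restrict (Icc (0:ℝ) S)), w s ≤ 2 * (a * v s - b * v s ^ 2)) :
    ∀ t ∈ Icc (0:ℝ) S,
      v t ≤ Real.exp (-b * t) * v 0 + a / b * (1 - Real.exp (-b * t)) := by
  have hsq : ∀ r t, 0 ≤ r → r ≤ t → t ≤ S →
      v t ^ 2 - v r ^ 2 ≤ ∫ s in r..t, 2 * (a * v s - b * v s ^ 2) :=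
    fun r t => sub_le_integral_of_eq_add_integral (u := fun t => v t ^ 2) hw
      (by fun_prop : ContinuousOn _ _).integrableOn_Icc heq hle
  intro t ht
  refine le_of_forall_pos_lt_add fun ε hε => ?_
  calc v t < relaxationCurve a b (v 0 + ε) t :=
        lt_relaxationCurve ha hb hv hvnn (lt_add_of_pos_right _ hε) hsq t ht
    _ ≤ relaxationCurve a b (v 0) t + ε := relaxationCurve_add_le hb.le ht.1 hε.le

/-- **Gronwall-type lemma.** Let `S > 0`, `a ≥ 0`, `b > 0` and let
`v : [0,S] → ℝ` be nonnegative and continuous.  Suppose `w` is Lebesgue integrable on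
`[0,S]` with `v(t)² = v(0)² + ∫₀ᵗ w` for every `t ∈ [0,S]` and
`w(s) ≤ 2(a v(s) − b v(s)²)` for a.e. `s ∈ [0,S]`.  Then
`v(t) ≤ e^{−bt} v(0) + (a/b)(1 − e^{−bt})` for every `t ∈ [0,S]`. -/
theorem gronwall_type (S a b : ℝ) (hS : 0 < S) (ha : 0 ≤ a) (hb : 0 < b)
    (v : ℝ → ℝ) (hv : ContinuousOn v (Icc 0 S)) (hvnn : ∀ t ∈ Icc (0:ℝ) S, 0 ≤ v t)
    (w : ℝ → ℝ) (hw : IntegrableOn w (Icc 0 S))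
    (heq : ∀ t ∈ Icc (0:ℝ) S, v t ^ 2 = v 0 ^ 2 + ∫ s in (0:ℝ)..t, w s)
    (hle : ∀ᵐ s ∂(volume.restrict (Icc (0:ℝ) S)), w s ≤ 2 * (a * v s - b * v s ^ 2)) :
    ∀ t ∈ Icc (0:ℝ) S,
      v t ≤ Real.exp (-b * t) * v 0 + a / b * (1 - Real.exp (-b * t)) :=
  gronwall_type_general S a b ha hb v hv hvnn w hw heq hle
end

section
/- (Existence of feasible parameters, continuous time.) Suppose there exists δ̄ > 0 such that Λ_m(δ̄) > M_λ · M_nc(δ̄). Then the set 𝒮_fp := {(δ,β,η,ε) ∈ (0,∞)⁴ : β^{-1} σ_η < δ γ(δ,η,ε) − √η ε M_λ} is a nonempty open subset of (0,∞)⁴. -/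
/-!
Nonemptiness is arithmetic at `δ = δ̄`: writing `Λ = Λ_m(δ̄)`, `N = M_nc(δ̄)`, `M = M_λ` and
choosing `ηε = Λ`, the right-hand side `δ̄ γ − √η ε M` equals `(δ̄/a)(a(Λ − aN/4) − ΛM)` with
`a = √η δ̄`, and some `a > 0` makes this positive exactly because `MN < Λ`; then `β` is taken
large. Openness holds because both sides of the defining strict inequality are continuous on
`(0,∞)⁴`: `Λ_m` and `M_nc` are an infimum and a supremum over `[0,S] × δ·B` of functions jointly
continuous by the Hessian hypotheses, and `σ_η ≤ √(max 1 (η'/η)) σ_η'` squeezes `σ` continuously.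
-/

open Set Metric MeasureTheory Filter
open scoped RealInnerProductSpace Topology

noncomputable section

namespace TVOpt

/-- Euclidean space `ℝ^d`. -/
abbrev E (d : ℕ) := EuclideanSpace ℝ (Fin d)

/-- Normal cone of a (convex) set `C` at a point `x`. -/
def normalCone {d : ℕ} (C : Set (E d)) (x : E d) : Set (E d) :=
  {y | ∀ w ∈ C, ⟪y, w - x⟫ ≤ 0}

/-- The nonnegative orthant `ℝ^m_+`. -/
def orthant (m : ℕ) : Set (E m) := {v | ∀ i, 0 ≤ v i}

/-- `p` is the Euclidean metric projection of `v` onto `C`. -/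
def IsProjection {d : ℕ} (C : Set (E d)) (v p : E d) : Prop :=
  p ∈ C ∧ ∀ w ∈ C, dist v p ≤ dist v w

/-- The `η`-weighted norm `‖(x,λ)‖_η = sqrt(‖x‖² + η⁻¹‖λ‖²)`. -/
def etaNorm {n m : ℕ} (η : ℝ) (z : E n × E m) : ℝ :=
  Real.sqrt (‖z.1‖ ^ 2 + η⁻¹ * ‖z.2‖ ^ 2)

variable {n m : ℕ}

/-- Maximal speed `σ_η` of a trajectory on `[0,S]`. -/
def sigmaEta (S : ℝ) (zstar : ℝ → E n × E m) (η : ℝ) : ℝ :=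
  ⨆ p : {q : ℝ × ℝ // q.1 ∈ Icc 0 S ∧ q.2 ∈ Icc 0 S ∧ q.1 ≠ q.2},
    etaNorm η (zstar p.1.2 - zstar p.1.1) / |p.1.2 - p.1.1|

/-- `M_λ = sup_{t ∈ [0,S]} ‖λ*(t) − λ_prior‖`. -/
def Mlam (S : ℝ) (ls : ℝ → E m) (lamprior : E m) : ℝ :=
  ⨆ t : Icc (0:ℝ) S, ‖ls t.1 - lamprior‖

/-- `M_nc(δ)`:  sup of the second-derivative norm of `f^nc` near the trajectory. -/
def Mnc (S : ℝ) (fnc : E n → ℝ → E m) (xs : ℝ → E n) (δ : ℝ) : ℝ :=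
  ⨆ p : {q : ℝ × E n // q.1 ∈ Icc 0 S ∧ ‖q.2‖ ≤ δ},
    ‖fderiv ℝ (fderiv ℝ (fun x => fnc x p.1.1)) (xs p.1.1 + p.1.2)‖

/-- `M_c(δ)`:  sup of the second-derivative norm of `f^c` near the trajectory. -/
def Mcc (S : ℝ) (fc : E n → ℝ → E m) (xs : ℝ → E n) (δ : ℝ) : ℝ :=
  ⨆ p : {q : ℝ × E n // q.1 ∈ Icc 0 S ∧ ‖q.2‖ ≤ δ},
    ‖fderiv ℝ (fderiv ℝ (fun x => fc x p.1.1)) (xs p.1.1 + p.1.2)‖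

/-- `L_f(δ)`: sup of the Jacobian operator norm of `f` near the trajectory. -/
def Lf (S : ℝ) (f : E n → ℝ → E m) (xs : ℝ → E n) (δ : ℝ) : ℝ :=
  ⨆ p : {q : ℝ × E n // q.1 ∈ Icc 0 S ∧ ‖q.2‖ ≤ δ},
    ‖fderiv ℝ (fun x => f x p.1.1) (xs p.1.1 + p.1.2)‖

/-- `sup_{t∈[0,S]} ‖λ*(t)‖`. -/
def supLam (S : ℝ) (ls : ℝ → E m) : ℝ := ⨆ t : Icc (0:ℝ) S, ‖ls t.1‖

/-- `D(δ,η) = √η L_f(δ) + M_c(δ) sup_t ‖λ*(t)‖`. -/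
def Dconst (S : ℝ) (fc fnc : E n → ℝ → E m) (xs : ℝ → E n) (ls : ℝ → E m) (δ η : ℝ) : ℝ :=
  Real.sqrt η * Lf S (fun x t => fc x t + fnc x t) xs δ + Mcc S fc xs δ * supLam S ls

/-- Hessian of a scalar function, as a linear operator on `ℝ^d`. -/
def hessOp {d : ℕ} (g : E d → ℝ) (x : E d) : E d →L[ℝ] E d :=
  fderiv ℝ (gradient g) x

/-- Nonconvex part of the Lagrangian, `ℒ^nc(x,λ,t) = c(x,t) + λᵀ f^nc(x,t)`. -/
def Lnc (c : E n → ℝ → ℝ) (fnc : E n → ℝ → E m) (x : E n) (lam : E m) (t : ℝ) : ℝ :=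
  c x t + ⟪lam, fnc x t⟫

/-- Averaged Hessian `H̄_{ℒ^nc}(u,t)`. -/
def HbarL (c : E n → ℝ → ℝ) (fnc : E n → ℝ → E m) (xs : ℝ → E n) (ls : ℝ → E m)
    (u : E n) (t : ℝ) : E n →L[ℝ] E n :=
  ∫ θ in (0:ℝ)..1, hessOp (fun x => Lnc c fnc x (ls t) t) (xs t + θ • u)

/-- Averaged Hessian `H̄_{f^c_i}(u,t)`. -/
def Hbarfc (fc : E n → ℝ → E m) (xs : ℝ → E n) (i : Fin m) (u : E n) (t : ℝ) :
    E n →L[ℝ] E n :=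
  ∫ θ in (0:ℝ)..1, (2 * (1 - θ)) • hessOp (fun x => fc x t i) (xs t + θ • u)

/-- `ρ^(P)(δ,α,η,ε)`. -/
def rhoP (S : ℝ) (c : E n → ℝ → ℝ) (fc fnc : E n → ℝ → E m) (xs : ℝ → E n) (ls : ℝ → E m)
    (δ α η ε : ℝ) : ℝ :=
  ⨆ p : {q : ℝ × E n // q.1 ∈ Icc 0 S ∧ ‖q.2‖ ≤ δ},
    ‖((1 : E n →L[ℝ] E n) - α • HbarL c fnc xs ls p.1.2 p.1.1) ^ 2
      - (α * (1 - η * α * ε)) • ∑ i, ls p.1.1 i • Hbarfc fc xs i p.1.2 p.1.1‖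

/-- The contraction factor `ρ(δ,α,η,ε)`. -/
def rho (S : ℝ) (c : E n → ℝ → ℝ) (fc fnc : E n → ℝ → E m) (xs : ℝ → E n) (ls : ℝ → E m)
    (δ α η ε : ℝ) : ℝ :=
  Real.sqrt (max (rhoP S c fc fnc xs ls δ α η ε) ((1 - η * α * ε) ^ 2)
    + α * (1 - η * α * ε) * (Real.sqrt η * δ * Mnc S fnc xs δ / 2)
    + α ^ 2 * (2 * (⨆ p : {q : ℝ × E n // q.1 ∈ Icc 0 S ∧ ‖q.2‖ ≤ δ},
          ‖(η * ε) • (1 : E n →L[ℝ] E n) - HbarL c fnc xs ls p.1.2 p.1.1‖)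
            * Dconst S fc fnc xs ls δ η
        + Dconst S fc fnc xs ls δ η ^ 2))

/-- The constant `κ(δ,α,η,ε)`. -/
def kappa (S : ℝ) (c : E n → ℝ → ℝ) (fc fnc : E n → ℝ → E m) (xs : ℝ → E n) (ls : ℝ → E m)
    (δ α η ε : ℝ) : ℝ :=
  max 1 (max ((1 - η * α * ε) / rho S c fc fnc xs ls δ α η ε)
    (Real.sqrt η * α * Lf S (fun x t => fc x t + fnc x t) xs δ
      / rho S c fc fnc xs ls δ α η ε))

/-- Smallest eigenvalue of a symmetric operator, `inf_{‖h‖=1} ⟪A h, h⟫`. -/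
def lambdaMin {d : ℕ} (A : E d →L[ℝ] E d) : ℝ :=
  ⨅ h : {h : E d // ‖h‖ = 1}, ⟪A h.1, h.1⟫

/-- `Λ_m(δ)`. -/
def LambdaM (S : ℝ) (c : E n → ℝ → ℝ) (fc fnc : E n → ℝ → E m) (xs : ℝ → E n)
    (ls : ℝ → E m) (δ : ℝ) : ℝ :=
  ⨅ p : {q : ℝ × E n // q.1 ∈ Icc 0 S ∧ ‖q.2‖ ≤ δ},
    lambdaMin (HbarL c fnc xs ls p.1.2 p.1.1
      + (2⁻¹ : ℝ) • ∑ i, ls p.1.1 i • Hbarfc fc xs i p.1.2 p.1.1)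

/-- `γ(δ,η,ε) = min{Λ_m(δ), ηε} − (√η/4) δ M_nc(δ)`. -/
def gammaC (S : ℝ) (c : E n → ℝ → ℝ) (fc fnc : E n → ℝ → E m) (xs : ℝ → E n)
    (ls : ℝ → E m) (δ η ε : ℝ) : ℝ :=
  min (LambdaM S c fc fnc xs ls δ) (η * ε) - Real.sqrt η / 4 * δ * Mnc S fnc xs δ

/-- The standing data and assumptions of the time-varying nonconvex problem. -/
structure Problem (n m : ℕ) where
  S : ℝ
  hS : 0 < S
  X : ℝ → Set (E n)
  c : E n → ℝ → ℝ
  fc : E n → ℝ → E m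
  fnc : E n → ℝ → E m
  hXne : ∀ t ∈ Icc 0 S, (X t).Nonempty
  hXcl : ∀ t ∈ Icc 0 S, IsClosed (X t)
  hXcv : ∀ t ∈ Icc 0 S, Convex ℝ (X t)
  hc : ∀ t ∈ Icc 0 S, ContDiff ℝ 2 fun x => c x t
  hfc : ∀ t ∈ Icc 0 S, ContDiff ℝ 2 fun x => fc x t
  hfnc : ∀ t ∈ Icc 0 S, ContDiff ℝ 2 fun x => fnc x t
  hcHess : ContinuousOn (fun p : E n × ℝ => fderiv ℝ (fderiv ℝ fun x => c x p.2) p.1)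
    (univ ×ˢ Icc 0 S)
  hfcHess : ∀ i : Fin m, ContinuousOn
    (fun p : E n × ℝ => fderiv ℝ (fderiv ℝ fun x => fc x p.2 i) p.1) (univ ×ˢ Icc 0 S)
  hfncHess : ∀ i : Fin m, ContinuousOn
    (fun p : E n × ℝ => fderiv ℝ (fderiv ℝ fun x => fnc x p.2 i) p.1) (univ ×ˢ Icc 0 S)
  hconv : ∀ t ∈ Icc 0 S, ∀ i : Fin m, ConvexOn ℝ univ fun x => fc x t i

/-- The full constraint function `f = f^c + f^nc`. -/
def Problem.f (P : Problem n m) : E n → ℝ → E m := fun x t => P.fc x t + P.fnc x t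

/-- The KKT conditions at time `t`. -/
def IsKKT (P : Problem n m) (t : ℝ) (x : E n) (lam : E m) : Prop :=
  x ∈ P.X t ∧ lam ∈ orthant m ∧
    -(gradient (fun y => P.c y t) x
        + ContinuousLinearMap.adjoint (fderiv ℝ (fun y => P.f y t) x) lam)
      ∈ normalCone (P.X t) x ∧
    P.f x t ∈ normalCone (orthant m) lam

/-- A Lipschitz trajectory with values in `𝒳(t) × ℝ^m_+`. -/
def IsTraj (P : Problem n m) (xs : ℝ → E n) (ls : ℝ → E m) : Prop :=
  (∃ L : NNReal, LipschitzOnWith L (fun t => (xs t, ls t)) (Icc 0 P.S)) ∧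
    ∀ t ∈ Icc 0 P.S, xs t ∈ P.X t ∧ ls t ∈ orthant m

/-- A Lipschitz KKT trajectory. -/
def IsKKTTraj (P : Problem n m) (xs : ℝ → E n) (ls : ℝ → E m) : Prop :=
  IsTraj P xs ls ∧ ∀ t ∈ Icc 0 P.S, IsKKT P t (xs t) (ls t)

/-- One step of the regularized primal-dual gradient method at time `t`,
from `zp` to `zn`. -/
def IsRPDStep (P : Problem n m) (lamprior : E m) (α η ε t : ℝ)
    (zp zn : E n × E m) : Prop :=
  IsProjection (P.X t)
    (zp.1 - α • (gradient (fun x => P.c x t) zp.1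
      + ContinuousLinearMap.adjoint (fderiv ℝ (fun x => P.f x t) zp.1) zp.2)) zn.1 ∧
  IsProjection (orthant m)
    (zp.2 + (η * α) • (P.f zp.1 t - ε • (zp.2 - lamprior))) zn.2

/-- A Lipschitz solution of the regularized primal-dual gradient flow. -/
def IsFlowSol (P : Problem n m) (lamprior : E m) (β η ε : ℝ)
    (z : ℝ → E n × E m) : Prop :=
  (∃ L : NNReal, LipschitzOnWith L z (Icc 0 P.S)) ∧
  (∀ t ∈ Icc 0 P.S, (z t).1 ∈ P.X t ∧ (z t).2 ∈ orthant m) ∧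
  ∀ᵐ t ∂(volume.restrict (Icc 0 P.S)), ∃ dz : E n × E m, HasDerivAt z dz t ∧
    (-dz.1 - β • (gradient (fun x => P.c x t) (z t).1
        + ContinuousLinearMap.adjoint (fderiv ℝ (fun x => P.f x t) (z t).1) (z t).2)
      ∈ normalCone (P.X t) (z t).1) ∧
    (-dz.2 + (η * β) • (P.f (z t).1 t - ε • ((z t).2 - lamprior))
      ∈ normalCone (orthant m) (z t).2)


/-- The set of feasible parameters `(δ,β,η,ε)` for the continuous-time algorithm. -/
def SfpC {n m : ℕ} (P : Problem n m) (xs : ℝ → E n) (ls : ℝ → E m) (lamprior : E m) :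
    Set (ℝ × ℝ × ℝ × ℝ) :=
  {q | 0 < q.1 ∧ 0 < q.2.1 ∧ 0 < q.2.2.1 ∧ 0 < q.2.2.2 ∧
    q.2.1⁻¹ * sigmaEta P.S (fun t => (xs t, ls t)) q.2.2.1
      < q.1 * gammaC P.S P.c P.fc P.fnc xs ls q.1 q.2.2.1 q.2.2.2
        - Real.sqrt q.2.2.1 * q.2.2.2 * Mlam P.S ls lamprior}

section SupOverBall

variable {X F α : Type*} [TopologicalSpace X] [NormedAddCommGroup F] [NormedSpace ℝ F]
  [ProperSpace F] [ConditionallyCompleteLinearOrder α] [TopologicalSpace α] [OrderTopology α]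
  {A : Set X} {G : X × F → α}

/- Rescaling `u = δ • v` turns the supremum over the ball of radius `δ` into a supremum over the
fixed compact set `A ×ˢ closedBall 0 1` of a function jointly continuous in `δ`. -/
theorem continuousOn_iSup_norm_le (hA : IsCompact A) (hG : ContinuousOn G (A ×ˢ univ)) :
    ContinuousOn (fun δ : ℝ => ⨆ p : {q : X × F // q.1 ∈ A ∧ ‖q.2‖ ≤ δ}, G p.1) (Ioi 0) := by
  set K : Set (X × F) := A ×ˢ closedBall 0 1
  have : CompactSpace K := isCompact_iff_compactSpace.mp (hA.prod (isCompact_closedBall 0 1))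
  have hcont : Continuous fun r : ℝ × K => G (r.2.1.1, r.1 • r.2.1.2) :=
    hG.comp_continuous (by fun_prop) fun r => ⟨r.2.2.1, trivial⟩
  refine (isCompact_univ.continuous_sSup (f := fun δ (p : K) => G (p.1.1, δ • p.1.2))
    hcont).continuousOn.congr fun δ (hδ : 0 < δ) => ?_
  let e : K ≃ {q : X × F // q.1 ∈ A ∧ ‖q.2‖ ≤ δ} :=
    ((Equiv.refl X).prodCongr (Homeomorph.smulOfNeZero δ hδ.ne').toEquiv).subtypeEquiv
      fun p => by simp [K, norm_smul, abs_of_pos hδ, mul_le_iff_le_one_right hδ]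
  simp only [image_univ]
  exact congrArg sSup (e.surjective.range_comp fun q => G q.1).symm

theorem continuousOn_iInf_norm_le (hA : IsCompact A) (hG : ContinuousOn G (A ×ˢ univ)) :
    ContinuousOn (fun δ : ℝ => ⨅ p : {q : X × F // q.1 ∈ A ∧ ‖q.2‖ ≤ δ}, G p.1) (Ioi 0) :=
  continuousOn_iSup_norm_le (α := αᵒᵈ) hA hG

end SupOverBall

theorem continuous_lambdaMin {d : ℕ} : Continuous (lambdaMin : (E d →L[ℝ] E d) → ℝ) := by
  have hsphere : IsCompact {h : E d | ‖h‖ = 1} := by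
    simpa only [← mem_sphere_zero_iff_norm, ofPred_mem_eq] using isCompact_sphere (0 : E d) 1
  have : CompactSpace {h : E d // ‖h‖ = 1} := isCompact_iff_compactSpace.mp hsphere
  have h := isCompact_univ.continuous_sInf
    (f := fun (A : E d →L[ℝ] E d) (h : {h : E d // ‖h‖ = 1}) => ⟪A h.1, h.1⟫) (by fun_prop)
  simp only [image_univ] at h
  exact h

section SecondDerivative

variable {U V W : Type*} [NormedAddCommGroup U] [NormedSpace ℝ U] [NormedAddCommGroup V]
  [NormedSpace ℝ V] [NormedAddCommGroup W] [NormedSpace ℝ W] {f g : U → V} {x : U}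

theorem fderiv_fderiv_clm_comp_apply (ℓ : V →L[ℝ] W) (hf : ContDiffAt ℝ 2 f x) (y z : U) :
    fderiv ℝ (fderiv ℝ fun w => ℓ (f w)) x y z = ℓ (fderiv ℝ (fderiv ℝ f) x y z) := by
  simpa [iteratedFDeriv_two_apply, Function.comp_def] using
    congrArg (· ![y, z]) (ℓ.iteratedFDeriv_comp_left hf (i := 2) le_rfl)

theorem fderiv_fderiv_add_apply (hf : ContDiffAt ℝ 2 f x) (hg : ContDiffAt ℝ 2 g x) (y z : U) :
    fderiv ℝ (fderiv ℝ fun w => f w + g w) x y z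
      = fderiv ℝ (fderiv ℝ f) x y z + fderiv ℝ (fderiv ℝ g) x y z := by
  simpa [iteratedFDeriv_two_apply, Pi.add_def] using
    congrArg (· ![y, z]) (iteratedFDeriv_add_apply hf hg)

theorem continuousOn_euclideanSpace_of_coord {X ι : Type*} [TopologicalSpace X] [Fintype ι]
    {f : X → EuclideanSpace ℝ ι} {s : Set X} (h : ∀ i, ContinuousOn (fun x => f x i) s) :
    ContinuousOn f s :=
  (EuclideanSpace.equiv ι ℝ).symm.continuous.comp_continuousOn (continuousOn_pi.2 h)

theorem continuousOn_fderiv_fderiv_of_coord [FiniteDimensional ℝ U] {Y ι : Type*}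
    [TopologicalSpace Y] [Fintype ι] {g : U → Y → EuclideanSpace ℝ ι} {T : Set Y}
    (hg : ∀ t ∈ T, ContDiff ℝ 2 (g · t))
    (hcoord : ∀ i, ContinuousOn (fun p : U × Y => fderiv ℝ (fderiv ℝ fun x => g x p.2 i) p.1)
      (univ ×ˢ T)) :
    ContinuousOn (fun p : U × Y => fderiv ℝ (fderiv ℝ fun x => g x p.2) p.1) (univ ×ˢ T) := by
  refine continuousOn_clm_apply.2 fun y => continuousOn_clm_apply.2 fun z =>
    continuousOn_euclideanSpace_of_coord fun i => ?_
  have h : ContinuousOn (fun p : U × Y => fderiv ℝ (fderiv ℝ fun x => g x p.2 i) p.1 y z)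
      (univ ×ˢ T) :=
    ((hcoord i).clm_apply continuousOn_const).clm_apply continuousOn_const
  refine h.congr fun p hp => ?_
  exact (fderiv_fderiv_clm_comp_apply (EuclideanSpace.proj i) (hg p.2 hp.2).contDiffAt y z).symm

theorem continuousOn_intervalIntegral_segment {T : Set ℝ} {xs : ℝ → U}
    (hxs : ContinuousOn xs T) {H : ℝ → U × ℝ → V}
    (hH : ContinuousOn (Function.uncurry H) (univ ×ˢ (univ ×ˢ T))) :
    ContinuousOn (fun q : ℝ × U => ∫ θ in (0:ℝ)..1, H θ (xs q.1 + θ • q.2, q.1)) (T ×ˢ univ) := by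
  rw [continuousOn_iff_continuous_domRestrict]
  have hx : Continuous fun r : (T ×ˢ (univ : Set U)) × ℝ => xs r.1.1.1 :=
    hxs.comp_continuous (by fun_prop) fun r => r.1.2.1
  have hH' : Continuous fun r : (T ×ˢ (univ : Set U)) × ℝ =>
      H r.2 (xs r.1.1.1 + r.2 • r.1.1.2, r.1.1.1) :=
    hH.comp_continuous
      (f := fun r : (T ×ˢ (univ : Set U)) × ℝ => (r.2, (xs r.1.1.1 + r.2 • r.1.1.2, r.1.1.1)))
      (continuous_snd.prodMk ((hx.add (continuous_snd.smul (by fun_prop))).prodMk (by fun_prop)))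
      fun r => ⟨trivial, trivial, r.1.2.1⟩
  exact intervalIntegral.continuous_parametric_intervalIntegral_of_continuous' hH' 0 1

end SecondDerivative

theorem hessOp_apply {d : ℕ} (g : E d → ℝ) (x y : E d) :
    hessOp g x y = (InnerProductSpace.toDual ℝ (E d)).symm (fderiv ℝ (fderiv ℝ g) x y) :=
  congrArg (· y) (LinearIsometryEquiv.comp_fderiv
    (iso := ((InnerProductSpace.toDual ℝ (E d)).symm : StrongDual ℝ (E d) ≃ₗᵢ[ℝ] E d)))

theorem continuousOn_hessOp {d : ℕ} {Y : Type*} [TopologicalSpace Y] {g : E d → Y → ℝ}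
    {s : Set (E d × Y)} (h : ContinuousOn (fun p => fderiv ℝ (fderiv ℝ (g · p.2)) p.1) s) :
    ContinuousOn (fun p => hessOp (g · p.2) p.1) s :=
  continuousOn_clm_apply.2 fun y => by
    simpa only [hessOp_apply, Function.comp_def] using
      (InnerProductSpace.toDual ℝ (E d)).symm.continuous.comp_continuousOn
        (h.clm_apply continuousOn_const (g := fun _ => y))

theorem fderiv_fderiv_Lnc_apply {c : E n → ℝ → ℝ} {fnc : E n → ℝ → E m} {t : ℝ} (lam : E m)
    (hc : ContDiff ℝ 2 (c · t)) (hf : ContDiff ℝ 2 (fnc · t)) (x y z : E n) :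
    fderiv ℝ (fderiv ℝ fun w => Lnc c fnc w lam t) x y z
      = fderiv ℝ (fderiv ℝ (c · t)) x y z + ⟪lam, fderiv ℝ (fderiv ℝ (fnc · t)) x y z⟫ := by
  unfold Lnc
  rw [fderiv_fderiv_add_apply hc.contDiffAt (contDiff_const.inner ℝ hf).contDiffAt]
  exact congrArg _ (fderiv_fderiv_clm_comp_apply (innerSL ℝ lam) hf.contDiffAt y z)

theorem etaNorm_le_sqrt_mul_norm {η : ℝ} (hη : 0 < η) (w : E n × E m) :
    etaNorm η w ≤ √(1 + η⁻¹) * ‖w‖ := by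
  rw [← Real.sqrt_sq (norm_nonneg w), ← Real.sqrt_mul (by positivity)]
  have h1 := pow_le_pow_left₀ (norm_nonneg _) (norm_fst_le w) 2
  have h2 := pow_le_pow_left₀ (norm_nonneg _) (norm_snd_le w) 2
  have h3 : 0 ≤ η⁻¹ := by positivity
  exact Real.sqrt_le_sqrt (by nlinarith)

theorem etaNorm_le_sqrt_max_mul {η η' : ℝ} (hη : 0 < η) (hη' : 0 < η') (w : E n × E m) :
    etaNorm η w ≤ √(max 1 (η' / η)) * etaNorm η' w := by
  rw [etaNorm, etaNorm, ← Real.sqrt_mul (by positivity)]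
  refine Real.sqrt_le_sqrt ?_
  have hinv : η⁻¹ = η' / η * η'⁻¹ := by field_simp
  have h1 : ‖w.1‖ ^ 2 ≤ max 1 (η' / η) * ‖w.1‖ ^ 2 :=
    le_mul_of_one_le_left (by positivity) (le_max_left _ _)
  have h2 : η⁻¹ * ‖w.2‖ ^ 2 ≤ max 1 (η' / η) * (η'⁻¹ * ‖w.2‖ ^ 2) := by
    rw [hinv, mul_assoc]
    exact mul_le_mul_of_nonneg_right (le_max_right _ _) (by positivity)
  linarith

section Speed

variable {S : ℝ} {z : ℝ → E n × E m} {L : NNReal}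

theorem bddAbove_range_etaNorm_div (hL : LipschitzOnWith L z (Icc 0 S)) {η : ℝ} (hη : 0 < η) :
    BddAbove (range fun p : {q : ℝ × ℝ // q.1 ∈ Icc 0 S ∧ q.2 ∈ Icc 0 S ∧ q.1 ≠ q.2} =>
      etaNorm η (z p.1.2 - z p.1.1) / |p.1.2 - p.1.1|) := by
  refine ⟨√(1 + η⁻¹) * L, forall_mem_range.2 fun ⟨(t₁, t₂), h₁, h₂, hne⟩ => ?_⟩
  rw [div_le_iff₀ (abs_pos.2 (sub_ne_zero.2 hne.symm)), mul_assoc]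
  refine (etaNorm_le_sqrt_mul_norm hη _).trans (mul_le_mul_of_nonneg_left ?_ (by positivity))
  simpa [← dist_eq_norm, Real.dist_eq] using hL.dist_le_mul t₂ h₂ t₁ h₁

theorem sigmaEta_le_sqrt_max_mul (hS : 0 < S) (hL : LipschitzOnWith L z (Icc 0 S)) {η η' : ℝ}
    (hη : 0 < η) (hη' : 0 < η') :
    sigmaEta S z η ≤ √(max 1 (η' / η)) * sigmaEta S z η' := by
  have : Nonempty {q : ℝ × ℝ // q.1 ∈ Icc 0 S ∧ q.2 ∈ Icc 0 S ∧ q.1 ≠ q.2} :=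
    ⟨⟨(0, S), left_mem_Icc.2 hS.le, right_mem_Icc.2 hS.le, hS.ne⟩⟩
  refine ciSup_le fun p => ?_
  calc etaNorm η (z p.1.2 - z p.1.1) / |p.1.2 - p.1.1|
      ≤ √(max 1 (η' / η)) * (etaNorm η' (z p.1.2 - z p.1.1) / |p.1.2 - p.1.1|) := by
        rw [← mul_div_assoc]
        exact div_le_div_of_nonneg_right (etaNorm_le_sqrt_max_mul hη hη' _) (abs_nonneg _)
    _ ≤ √(max 1 (η' / η)) * sigmaEta S z η' :=
        mul_le_mul_of_nonneg_left (le_ciSup (bddAbove_range_etaNorm_div hL hη') p)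
          (Real.sqrt_nonneg _)

theorem continuousOn_sigmaEta (hS : 0 < S) (hL : LipschitzOnWith L z (Icc 0 S)) :
    ContinuousOn (sigmaEta S z) (Ioi 0) := by
  intro η₀ (hη₀ : 0 < η₀)
  refine ContinuousAt.continuousWithinAt ?_
  have hk : ∀ {f : ℝ → ℝ}, ContinuousAt f η₀ → f η₀ = 1 →
      Tendsto (fun η => √(max 1 (f η))) (𝓝 η₀) (𝓝 1) := fun hf hf₀ => by
    simpa [hf₀] using (tendsto_const_nhds (x := (1 : ℝ)).max hf).sqrt
  have hup := (hk (continuousAt_const.div continuousAt_id hη₀.ne') (div_self hη₀.ne')).mul_const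
    (sigmaEta S z η₀)
  have hlow := tendsto_const_nhds (x := sigmaEta S z η₀) |>.div
    (hk (continuousAt_id.div_const η₀) (div_self hη₀.ne')) one_ne_zero
  rw [one_mul] at hup
  rw [div_one] at hlow
  refine tendsto_of_tendsto_of_tendsto_of_le_of_le' hlow hup ?_ ?_ <;>
    filter_upwards [Ioi_mem_nhds hη₀] with η hη
  · rw [Pi.div_apply, div_le_iff₀' (Real.sqrt_pos.2 (lt_max_of_lt_left one_pos))]
    exact sigmaEta_le_sqrt_max_mul hS hL hη₀ hη
  · exact sigmaEta_le_sqrt_max_mul hS hL hη hη₀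

end Speed

theorem exists_mul_sub_gt {Λ M N : ℝ} (hM : 0 ≤ M) (hN : 0 ≤ N) (h : M * N < Λ) :
    ∃ a > 0, Λ * M < a * (Λ - a * N / 4) := by
  set r := (Λ - M * N) / (N + 1)
  have hr : 0 < r := div_pos (by linarith) (by linarith)
  have hr' : r * (N + 1) = Λ - M * N := div_mul_cancel₀ _ (by linarith)
  refine ⟨2 * M + r, by linarith, ?_⟩
  nlinarith [mul_nonneg hM (sub_nonneg.2 h.le), mul_pos hr hr]

theorem exists_feasible_margin {Λ M N δ : ℝ} (hM : 0 ≤ M) (hN : 0 ≤ N) (hδ : 0 < δ)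
    (h : M * N < Λ) :
    ∃ η > 0, ∃ ε > 0, 0 < δ * (min Λ (η * ε) - √η / 4 * δ * N) - √η * ε * M := by
  obtain ⟨a, ha, hlt⟩ := exists_mul_sub_gt hM hN h
  have hΛ : 0 < Λ := (mul_nonneg hM hN).trans_lt h
  set s := a / δ
  have hs : 0 < s := div_pos ha hδ
  have hsδ : s * δ = a := div_mul_cancel₀ _ hδ.ne'
  refine ⟨s ^ 2, by positivity, Λ / s ^ 2, by positivity, ?_⟩
  rw [Real.sqrt_sq hs.le, mul_div_cancel₀ _ (by positivity), min_self]
  have key : 0 < s * (δ * (Λ - s / 4 * δ * N) - s * (Λ / s ^ 2) * M) := by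
    field_simp
    rw [hsδ]
    linarith
  exact pos_of_mul_pos_right key hs.le

theorem Mlam_nonneg (S : ℝ) (ls : ℝ → E m) (lamprior : E m) : 0 ≤ Mlam S ls lamprior :=
  Real.iSup_nonneg fun _ => norm_nonneg _

theorem Mnc_nonneg (S : ℝ) (fnc : E n → ℝ → E m) (xs : ℝ → E n) (δ : ℝ) : 0 ≤ Mnc S fnc xs δ :=
  Real.iSup_nonneg fun _ => ContinuousLinearMap.opNorm_nonneg _

namespace Problem

variable (P : Problem n m)

section Continuity

variable {xs : ℝ → E n} {ls : ℝ → E m}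

theorem continuousOn_fderiv_fderiv_fnc :
    ContinuousOn (fun p : E n × ℝ => fderiv ℝ (fderiv ℝ (P.fnc · p.2)) p.1)
      (univ ×ˢ Icc 0 P.S) :=
  continuousOn_fderiv_fderiv_of_coord P.hfnc P.hfncHess

theorem continuousOn_hessOp_Lnc (hls : ContinuousOn ls (Icc 0 P.S)) :
    ContinuousOn (fun p : E n × ℝ => hessOp (fun x => Lnc P.c P.fnc x (ls p.2) p.2) p.1)
      (univ ×ˢ Icc 0 P.S) := by
  refine continuousOn_hessOp (g := fun x t => Lnc P.c P.fnc x (ls t) t) <|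
    continuousOn_clm_apply.2 fun y => continuousOn_clm_apply.2 fun z => ?_
  refine ContinuousOn.congr
    (f := fun p => fderiv ℝ (fderiv ℝ (P.c · p.2)) p.1 y z
      + ⟪ls p.2, fderiv ℝ (fderiv ℝ (P.fnc · p.2)) p.1 y z⟫) ?_
    fun p hp => fderiv_fderiv_Lnc_apply _ (P.hc p.2 hp.2) (P.hfnc p.2 hp.2) p.1 y z
  exact ((P.hcHess.clm_apply continuousOn_const).clm_apply continuousOn_const).add
    ((hls.comp continuousOn_snd fun p hp => hp.2).inner
      ((P.continuousOn_fderiv_fderiv_fnc.clm_apply continuousOn_const).clm_apply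
        continuousOn_const))

theorem continuousOn_HbarL (hxs : ContinuousOn xs (Icc 0 P.S))
    (hls : ContinuousOn ls (Icc 0 P.S)) :
    ContinuousOn (fun q : ℝ × E n => HbarL P.c P.fnc xs ls q.2 q.1) (Icc 0 P.S ×ˢ univ) :=
  continuousOn_intervalIntegral_segment hxs
    (H := fun _ p => hessOp (fun x => Lnc P.c P.fnc x (ls p.2) p.2) p.1)
    ((P.continuousOn_hessOp_Lnc hls).comp continuousOn_snd fun _ hr => hr.2)

theorem continuousOn_Hbarfc (hxs : ContinuousOn xs (Icc 0 P.S)) (i : Fin m) :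
    ContinuousOn (fun q : ℝ × E n => Hbarfc P.fc xs i q.2 q.1) (Icc 0 P.S ×ˢ univ) :=
  continuousOn_intervalIntegral_segment hxs
    (H := fun θ p => (2 * (1 - θ)) • hessOp (fun x => P.fc x p.2 i) p.1)
    ((by fun_prop : Continuous fun r : ℝ × E n × ℝ => 2 * (1 - r.1)).continuousOn.smul
      ((continuousOn_hessOp (g := fun x t => P.fc x t i) (P.hfcHess i)).comp continuousOn_snd
        fun _ hr => hr.2))

theorem continuousOn_LambdaM (hxs : ContinuousOn xs (Icc 0 P.S))
    (hls : ContinuousOn ls (Icc 0 P.S)) :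
    ContinuousOn (LambdaM P.S P.c P.fc P.fnc xs ls) (Ioi 0) := by
  have hls' : ContinuousOn (fun q : ℝ × E n => ls q.1) (Icc 0 P.S ×ˢ univ) :=
    hls.comp continuousOn_fst fun _ hq => hq.1
  have hlsi : ∀ i, ContinuousOn (fun q : ℝ × E n => ls q.1 i) (Icc 0 P.S ×ˢ univ) := fun i =>
    (EuclideanSpace.proj i).continuous.comp_continuousOn hls'
  have hsum : ContinuousOn (fun q : ℝ × E n => ∑ i, ls q.1 i • Hbarfc P.fc xs i q.2 q.1)
      (Icc 0 P.S ×ˢ univ) :=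
    continuousOn_finsetSum _ fun i _ => (hlsi i).fun_smul (P.continuousOn_Hbarfc hxs i)
  have hA : ContinuousOn (fun q : ℝ × E n => HbarL P.c P.fnc xs ls q.2 q.1
      + (2⁻¹ : ℝ) • ∑ i, ls q.1 i • Hbarfc P.fc xs i q.2 q.1) (Icc 0 P.S ×ˢ univ) :=
    (P.continuousOn_HbarL hxs hls).add (hsum.fun_const_smul (2⁻¹ : ℝ))
  exact (continuousOn_iInf_norm_le isCompact_Icc (continuous_lambdaMin.comp_continuousOn hA) :)

theorem continuousOn_Mnc (hxs : ContinuousOn xs (Icc 0 P.S)) :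
    ContinuousOn (Mnc P.S P.fnc xs) (Ioi 0) := by
  have hpt : ContinuousOn (fun q : ℝ × E n => (xs q.1 + q.2, q.1)) (Icc 0 P.S ×ˢ univ) :=
    ((hxs.comp continuousOn_fst fun _ hq => hq.1).add continuousOn_snd).prodMk continuousOn_fst
  have hD : ContinuousOn (fun q : ℝ × E n => fderiv ℝ (fderiv ℝ (P.fnc · q.1)) (xs q.1 + q.2))
      (Icc 0 P.S ×ˢ univ) :=
    P.continuousOn_fderiv_fderiv_fnc.comp hpt fun _ hq => ⟨trivial, hq.1⟩
  exact (continuousOn_iSup_norm_le isCompact_Icc (hD.norm (E := E n →L[ℝ] E n →L[ℝ] E m)) :)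

end Continuity

variable (xs : ℝ → E n) (ls : ℝ → E m) (lamprior : E m)

theorem SfpC_nonempty (hσ : ∀ η : ℝ, 0 < η → 0 < sigmaEta P.S (fun t => (xs t, ls t)) η)
    {δ : ℝ} (hδ : 0 < δ)
    (h : Mlam P.S ls lamprior * Mnc P.S P.fnc xs δ < LambdaM P.S P.c P.fc P.fnc xs ls δ) :
    (SfpC P xs ls lamprior).Nonempty := by
  obtain ⟨η, hη, ε, hε, hT⟩ :=
    exists_feasible_margin (Mlam_nonneg _ _ _) (Mnc_nonneg _ _ _ _) hδ h
  set T := δ * gammaC P.S P.c P.fc P.fnc xs ls δ η ε - √η * ε * Mlam P.S ls lamprior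
  set σ := sigmaEta P.S (fun t => (xs t, ls t)) η
  have hση : 0 < σ := hσ η hη
  have hT' : 0 < T := hT
  refine ⟨(δ, 2 * σ / T, η, ε), hδ, by positivity, hη, hε, ?_⟩
  show (2 * σ / T)⁻¹ * σ < T
  rw [inv_div, div_mul_eq_mul_div, div_lt_iff₀ (by positivity)]
  nlinarith

theorem isOpen_SfpC (htraj : IsTraj P xs ls) : IsOpen (SfpC P xs ls lamprior) := by
  obtain ⟨⟨L, hL⟩, -⟩ := htraj
  have hxs : ContinuousOn xs (Icc 0 P.S) := continuous_fst.comp_continuousOn hL.continuousOn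
  have hls : ContinuousOn ls (Icc 0 P.S) := continuous_snd.comp_continuousOn hL.continuousOn
  rw [isOpen_iff_mem_nhds]
  rintro ⟨δ, β, η, ε⟩ ⟨hδ, hβ, hη, hε, hlt⟩
  have hΛ := (P.continuousOn_LambdaM hxs hls).continuousAt (Ioi_mem_nhds hδ)
  have hN := (P.continuousOn_Mnc hxs).continuousAt (Ioi_mem_nhds hδ)
  have hσ := (continuousOn_sigmaEta P.hS hL).continuousAt (Ioi_mem_nhds hη)
  have hlhs : ContinuousAt (fun q : ℝ × ℝ × ℝ × ℝ =>
      q.2.1⁻¹ * sigmaEta P.S (fun t => (xs t, ls t)) q.2.2.1) (δ, β, η, ε) := by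
    fun_prop (disch := positivity)
  have hrhs : ContinuousAt (fun q : ℝ × ℝ × ℝ × ℝ =>
      q.1 * gammaC P.S P.c P.fc P.fnc xs ls q.1 q.2.2.1 q.2.2.2
        - √q.2.2.1 * q.2.2.2 * Mlam P.S ls lamprior) (δ, β, η, ε) := by
    unfold gammaC
    fun_prop
  filter_upwards [continuousAt_fst.eventually (lt_mem_nhds hδ),
    continuousAt_snd.fst.eventually (lt_mem_nhds hβ),
    continuousAt_snd.snd.fst.eventually (lt_mem_nhds hη),
    continuousAt_snd.snd.snd.eventually (lt_mem_nhds hε),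
    hlhs.eventually_lt hrhs hlt] with q h₁ h₂ h₃ h₄ h₅
  exact ⟨h₁, h₂, h₃, h₄, h₅⟩

end Problem

theorem feasible_parameters_continuous_general {n m : ℕ} (P : Problem n m)
    (xs : ℝ → E n) (ls : ℝ → E m) (htraj : IsTraj P xs ls)
    (lamprior : E m)
    (hσ : ∀ η : ℝ, 0 < η → 0 < sigmaEta P.S (fun t => (xs t, ls t)) η)
    (hexist : ∃ δbar : ℝ, 0 < δbar ∧
      Mlam P.S ls lamprior * Mnc P.S P.fnc xs δbar
        < LambdaM P.S P.c P.fc P.fnc xs ls δbar) :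
    (SfpC P xs ls lamprior).Nonempty ∧ IsOpen (SfpC P xs ls lamprior) := by
  obtain ⟨δbar, hδbar, hex⟩ := hexist
  exact ⟨P.SfpC_nonempty xs ls lamprior hσ hδbar hex, P.isOpen_SfpC xs ls lamprior htraj⟩

/-- **existence of feasible parameters, continuous time.**
If `Λ_m(δ̄) > M_λ · M_nc(δ̄)` for some `δ̄ > 0`, then the feasible parameter set
`𝒮_fp` is a nonempty open subset of `(0,∞)⁴`. -/
theorem feasible_parameters_continuous {n m : ℕ} (P : Problem n m)
    (xs : ℝ → E n) (ls : ℝ → E m) (htraj : IsTraj P xs ls)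
    (lamprior : E m) (hprior : lamprior ∈ orthant m)
    (hσ : ∀ η : ℝ, 0 < η → 0 < sigmaEta P.S (fun t => (xs t, ls t)) η)
    (hexist : ∃ δbar : ℝ, 0 < δbar ∧
      Mlam P.S ls lamprior * Mnc P.S P.fnc xs δbar
        < LambdaM P.S P.c P.fc P.fnc xs ls δbar) :
    (SfpC P xs ls lamprior).Nonempty ∧ IsOpen (SfpC P xs ls lamprior) :=
  feasible_parameters_continuous_general P xs ls htraj lamprior hσ hexist

end TVOpt
end
end

section
/- (Separation of distinct KKT trajectories.) Let z*_{(1)} and z*_{(2)} be two Lipschitz continuous KKT trajectories. Suppose there exist δ₁ > 0, δ₂ > 0 and η > 0 such that Λ_m^{(i)}(δ_i) − (√η/2) δ_i M_nc^{(i)}(δ_i) > 0 for i = 1, 2, and suppose that for some t ∈ [0,S] one has x*_{(1)}(t) ≠ x*_{(2)}(t). Then ‖z*_{(1)}(t) − z*_{(2)}(t)‖_η > δ₁ + δ₂. -/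
/-!
Write `F (x, λ) = (∇ₓℒ(x, λ, t), -f(x, t))` for the KKT operator at time `t`; a KKT point `z`
solves the variational inequality `⟪F z, z' - z⟫ ≥ 0` on `𝒳(t) × ℝ^m_+`.
Near a KKT trajectory, `F` is strongly monotone in `x` on the `η`-box of radius `δ`: expanding
`⟪F (z + w) - F z, w⟫` by Taylor's formula along the segment, the averaged Hessians contribute at
least `Λ_m(δ) ‖u‖²`, the convex part `f^c` a nonnegative tangent gap, and the nonconvex part
`f^nc` an error of at most `(√η / 2) δ M_nc(δ) ‖u‖²`. If two KKT points were within `δ₁ + δ₂`,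
the point dividing their segment in the ratio `δ₁ : δ₂` would lie in both boxes, and the two
monotonicity estimates there would add up to `⟪F z₂ - F z₁, z₂ - z₁⟫ > 0`, contradicting the two
variational inequalities.
-/

open Set Metric MeasureTheory Filter
open scoped RealInnerProductSpace Topology

noncomputable section

section SegmentTaylor

variable {V F : Type*} [NormedAddCommGroup V] [NormedSpace ℝ V]
  [NormedAddCommGroup F] [NormedSpace ℝ F] {g : V → F}

lemma ContDiff.continuous_fderiv_fderiv (hg : ContDiff ℝ 2 g) :
    Continuous (fderiv ℝ (fderiv ℝ g)) :=
  (hg.fderiv_right (m := 1) (by norm_num)).continuous_fderiv one_ne_zero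

lemma hasDerivAt_comp_add_smul (hg : Differentiable ℝ g) (x u : V) (s : ℝ) :
    HasDerivAt (fun θ : ℝ => g (x + θ • u)) (fderiv ℝ g (x + s • u) u) s := by
  have hline : HasDerivAt (fun θ : ℝ => x + θ • u) u s := by
    simpa using ((hasDerivAt_id s).smul_const u).const_add x
  exact (hg _).hasFDerivAt.comp_hasDerivAt s hline

lemma hasDerivAt_fderiv_comp_add_smul (hg : ContDiff ℝ 2 g) (x u : V) (s : ℝ) :
    HasDerivAt (fun θ : ℝ => fderiv ℝ g (x + θ • u) u)
      (fderiv ℝ (fderiv ℝ g) (x + s • u) u u) s := by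
  have hdg : Differentiable ℝ (fderiv ℝ g) :=
    (hg.fderiv_right (m := 1) (by norm_num)).differentiable one_ne_zero
  exact (ContinuousLinearMap.apply ℝ F u).hasFDerivAt.comp_hasDerivAt s
    (hasDerivAt_comp_add_smul hdg x u s)

lemma continuous_fderiv_fderiv_comp_add_smul (hg : ContDiff ℝ 2 g) (x u : V) :
    Continuous fun θ : ℝ => fderiv ℝ (fderiv ℝ g) (x + θ • u) u u := by
  fun_prop (disch := exact hg.continuous_fderiv_fderiv)

variable [CompleteSpace F]

lemma fderiv_apply_sub_fderiv_apply_eq_integral (hg : ContDiff ℝ 2 g) (x u : V) :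
    fderiv ℝ g (x + u) u - fderiv ℝ g x u
      = ∫ θ in (0:ℝ)..1, fderiv ℝ (fderiv ℝ g) (x + θ • u) u u := by
  rw [intervalIntegral.integral_eq_sub_of_hasDerivAt
    (fun s _ => hasDerivAt_fderiv_comp_add_smul hg x u s)
    ((continuous_fderiv_fderiv_comp_add_smul hg x u).intervalIntegrable 0 1)]
  simp

lemma sub_sub_fderiv_apply_eq_integral (hg : ContDiff ℝ 2 g) (x u : V) :
    g (x + u) - g x - fderiv ℝ g x u
      = ∫ θ in (0:ℝ)..1, (1 - θ) • fderiv ℝ (fderiv ℝ g) (x + θ • u) u u := by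
  have hderiv : ∀ s ∈ uIcc (0:ℝ) 1, HasDerivAt
      (fun θ : ℝ => (1 - θ) • fderiv ℝ g (x + θ • u) u + g (x + θ • u))
      ((1 - s) • fderiv ℝ (fderiv ℝ g) (x + s • u) u u) s := by
    intro s _
    have h := (((hasDerivAt_id s).const_sub 1).fun_smul
      (hasDerivAt_fderiv_comp_add_smul hg x u s)).fun_add
      (hasDerivAt_comp_add_smul (hg.differentiable (by norm_num)) x u s)
    convert h using 1 <;> simp
  have hcont := continuous_fderiv_fderiv_comp_add_smul hg x u
  rw [intervalIntegral.integral_eq_sub_of_hasDerivAt hderiv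
    (by apply Continuous.intervalIntegrable; fun_prop)]
  simp only [sub_self, zero_smul, one_smul, zero_add, sub_zero, add_zero]
  abel

lemma norm_fderiv_apply_sub_sub_le (hg : ContDiff ℝ 2 g) (x u : V) {M : ℝ}
    (hM : ∀ θ ∈ Icc (0:ℝ) 1, ‖fderiv ℝ (fderiv ℝ g) (x + θ • u)‖ ≤ M) :
    ‖fderiv ℝ g (x + u) u - (g (x + u) - g x)‖ ≤ M * ‖u‖ ^ 2 / 2 := by
  have hderiv : ∀ s ∈ uIcc (0:ℝ) 1, HasDerivAt
      (fun θ : ℝ => θ • fderiv ℝ g (x + θ • u) u - g (x + θ • u))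
      (s • fderiv ℝ (fderiv ℝ g) (x + s • u) u u) s := by
    intro s _
    have h := ((hasDerivAt_id s).fun_smul (hasDerivAt_fderiv_comp_add_smul hg x u s)).fun_sub
      (hasDerivAt_comp_add_smul (hg.differentiable (by norm_num)) x u s)
    convert h using 1 <;> simp
  have hcont := continuous_fderiv_fderiv_comp_add_smul hg x u
  have heq := intervalIntegral.integral_eq_sub_of_hasDerivAt hderiv
    (by apply Continuous.intervalIntegrable; fun_prop)
  have hlhs : fderiv ℝ g (x + u) u - (g (x + u) - g x)
      = ∫ θ in (0:ℝ)..1, θ • fderiv ℝ (fderiv ℝ g) (x + θ • u) u u := by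
    rw [heq]; simp only [zero_smul, one_smul, add_zero]; abel
  rw [hlhs]
  calc ‖∫ θ in (0:ℝ)..1, θ • fderiv ℝ (fderiv ℝ g) (x + θ • u) u u‖
      ≤ ∫ θ in (0:ℝ)..1, θ * (M * ‖u‖ ^ 2) := by
        refine intervalIntegral.norm_integral_le_of_norm_le zero_le_one
          (Eventually.of_forall fun θ hθ => ?_) (by apply Continuous.intervalIntegrable; fun_prop)
        have hθ' : θ ∈ Icc (0:ℝ) 1 := Ioc_subset_Icc_self hθ
        have hbound : ‖fderiv ℝ (fderiv ℝ g) (x + θ • u) u u‖ ≤ M * ‖u‖ ^ 2 :=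
          ((fderiv ℝ (fderiv ℝ g) (x + θ • u)).le_opNorm₂ u u).trans
            (by rw [sq, ← mul_assoc]; gcongr; exact hM θ hθ')
        rw [norm_smul, Real.norm_of_nonneg hθ'.1]
        exact mul_le_mul_of_nonneg_left hbound hθ'.1
    _ = M * ‖u‖ ^ 2 / 2 := by
        rw [intervalIntegral.integral_mul_const, integral_id]
        ring

end SegmentTaylor

lemma ConvexOn.add_fderiv_sub_le {V : Type*} [NormedAddCommGroup V] [NormedSpace ℝ V]
    {s : Set V} {g : V → ℝ} (hg : ConvexOn ℝ s g) {x y : V} (hx : x ∈ s) (hy : y ∈ s)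
    (hd : DifferentiableAt ℝ g x) :
    g x + fderiv ℝ g x (y - x) ≤ g y := by
  have hseg : ConvexOn ℝ (Icc 0 1) (g ∘ AffineMap.lineMap (k := ℝ) x y) :=
    (hg.comp_affineMap _).subset (fun θ hθ => hg.1.lineMap_mem hx hy hθ) (convex_Icc 0 1)
  have hderiv : HasDerivAt (g ∘ AffineMap.lineMap (k := ℝ) x y) (fderiv ℝ g x (y - x)) 0 := by
    have hd' : DifferentiableAt ℝ g (AffineMap.lineMap x y (0:ℝ)) := by simpa using hd
    simpa using hd'.hasFDerivAt.comp_hasDerivAt 0 AffineMap.hasDerivAt_lineMap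
  have hslope := hseg.le_slope_of_hasDerivAt (left_mem_Icc.2 zero_le_one)
    (right_mem_Icc.2 zero_le_one) zero_lt_one hderiv
  simp only [slope, Function.comp_apply, AffineMap.lineMap_apply_zero,
    AffineMap.lineMap_apply_one, sub_zero, inv_one, one_smul, vsub_eq_sub] at hslope
  linarith

namespace TVOpt

section Hessian

variable {d : ℕ} {g : E d → ℝ}

lemma hessOp_eq_comp (y : E d) :
    hessOp g y = ((InnerProductSpace.toDual ℝ (E d)).symm.toContinuousLinearEquiv
      : StrongDual ℝ (E d) ≃L[ℝ] E d).toContinuousLinearMap.comp (fderiv ℝ (fderiv ℝ g) y) :=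
  ((InnerProductSpace.toDual ℝ (E d)).symm.toContinuousLinearEquiv
    : StrongDual ℝ (E d) ≃L[ℝ] E d).comp_fderiv (f := fderiv ℝ g)

lemma inner_hessOp_apply (y u v : E d) :
    ⟪hessOp g y u, v⟫ = fderiv ℝ (fderiv ℝ g) y u v := by
  rw [hessOp_eq_comp]
  exact InnerProductSpace.toDual_symm_apply

lemma inner_integral_smul_hessOp_apply (hg : ContDiff ℝ 2 g) (x u : E d) {ρ : ℝ → ℝ}
    (hρ : Continuous ρ) :
    ⟪(∫ θ in (0:ℝ)..1, ρ θ • hessOp g (x + θ • u)) u, u⟫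
      = ∫ θ in (0:ℝ)..1, ρ θ • fderiv ℝ (fderiv ℝ g) (x + θ • u) u u := by
  have hcont : Continuous fun θ : ℝ => ρ θ • hessOp g (x + θ • u) := by
    simp_rw [hessOp_eq_comp]
    have := hg.continuous_fderiv_fderiv
    fun_prop
  let quad : (E d →L[ℝ] E d) →L[ℝ] ℝ :=
    (innerSL ℝ u).comp (ContinuousLinearMap.apply ℝ (E d) u)
  have hquad : ∀ A : E d →L[ℝ] E d, quad A = ⟪A u, u⟫ := fun A => real_inner_comm (A u) u
  rw [← hquad, ← quad.intervalIntegral_comp_comm (hcont.intervalIntegrable 0 1)]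
  simp only [hquad, smul_apply, real_inner_smul_left, inner_hessOp_apply,
    smul_eq_mul]

lemma inner_integral_hessOp_apply (hg : ContDiff ℝ 2 g) (x u : E d) :
    ⟪(∫ θ in (0:ℝ)..1, hessOp g (x + θ • u)) u, u⟫
      = fderiv ℝ g (x + u) u - fderiv ℝ g x u := by
  simpa [fderiv_apply_sub_fderiv_apply_eq_integral hg] using
    inner_integral_smul_hessOp_apply hg x u (ρ := fun _ => 1) continuous_const

lemma inner_integral_two_mul_smul_hessOp_apply (hg : ContDiff ℝ 2 g) (x u : E d) :
    ⟪(∫ θ in (0:ℝ)..1, (2 * (1 - θ)) • hessOp g (x + θ • u)) u, u⟫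
      = 2 * (g (x + u) - g x - fderiv ℝ g x u) := by
  rw [inner_integral_smul_hessOp_apply hg x u (by fun_prop), sub_sub_fderiv_apply_eq_integral hg,
    ← intervalIntegral.integral_const_mul]
  simp only [smul_eq_mul, mul_assoc]

end Hessian

lemma lambdaMin_mul_norm_sq_le {d : ℕ} (A : E d →L[ℝ] E d) (u : E d) :
    lambdaMin A * ‖u‖ ^ 2 ≤ ⟪A u, u⟫ := by
  rcases eq_or_ne u 0 with rfl | hu
  · simp
  have hbdd : BddBelow (range fun h : {h : E d // ‖h‖ = 1} => ⟪A h.1, h.1⟫) := by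
    refine ⟨-‖A‖, ?_⟩
    rintro _ ⟨⟨h, hh⟩, rfl⟩
    have := (abs_real_inner_le_norm (A h) h).trans
      (mul_le_mul_of_nonneg_right (A.le_opNorm h) (norm_nonneg h))
    rw [hh, mul_one, mul_one] at this
    exact neg_le_of_abs_le this
  have hunit : ‖‖u‖⁻¹ • u‖ = 1 := norm_smul_inv_norm hu
  have hle := ciInf_le hbdd ⟨_, hunit⟩
  simp only [map_smul, real_inner_smul_left, real_inner_smul_right] at hle
  calc lambdaMin A * ‖u‖ ^ 2 ≤ ‖u‖⁻¹ * (‖u‖⁻¹ * ⟪A u, u⟫) * ‖u‖ ^ 2 := by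
        gcongr; exact hle
    _ = ⟪A u, u⟫ := by field_simp


lemma convex_orthant (m : ℕ) : Convex ℝ (orthant m) := by
  intro a ha b hb s r hs hr _ i
  simp only [PiLp.add_apply, PiLp.smul_apply, smul_eq_mul]
  exact add_nonneg (mul_nonneg hs (ha i)) (mul_nonneg hr (hb i))

lemma inner_nonneg_of_mem_orthant {m : ℕ} {a b : E m} (ha : a ∈ orthant m) (hb : b ∈ orthant m) :
    0 ≤ ⟪a, b⟫ := by
  rw [PiLp.inner_apply]
  exact Finset.sum_nonneg fun i _ => mul_nonneg (hb i) (ha i)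

section EtaNorm

variable {n m : ℕ} {η : ℝ}

lemma etaNorm_sub_comm (η : ℝ) (z z' : E n × E m) : etaNorm η (z - z') = etaNorm η (z' - z) := by
  simp only [etaNorm, Prod.fst_sub, Prod.snd_sub, norm_sub_rev]

lemma norm_fst_le_etaNorm (hη : 0 ≤ η) (z : E n × E m) : ‖z.1‖ ≤ etaNorm η z :=
  Real.le_sqrt_of_sq_le (le_add_of_nonneg_right (by positivity))

lemma norm_snd_le_sqrt_mul_etaNorm (hη : 0 < η) (z : E n × E m) :
    ‖z.2‖ ≤ √η * etaNorm η z := by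
  rw [etaNorm, ← Real.sqrt_mul hη.le]
  refine Real.le_sqrt_of_sq_le ?_
  rw [mul_add, ← mul_assoc, mul_inv_cancel₀ hη.ne', one_mul]
  exact le_add_of_nonneg_left (by positivity)

end EtaNorm

section Components

variable {V : Type*} [NormedAddCommGroup V] [NormedSpace ℝ V] {k : ℕ}

lemma norm_le_sum_norm_apply (w : E k) : ‖w‖ ≤ ∑ i, ‖w i‖ := by
  rw [EuclideanSpace.norm_eq]
  exact (Real.sqrt_le_sqrt (Finset.sum_sq_le_sq_sum_of_nonneg fun i _ => norm_nonneg _)).trans_eq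
    (Real.sqrt_sq (by positivity))

lemma fderiv_apply_eq_comp {F : V → E k} {y : V} (hF : DifferentiableAt ℝ F y) (i : Fin k) :
    fderiv ℝ (fun x => F x i) y = (EuclideanSpace.proj i).comp (fderiv ℝ F y) :=
  ((EuclideanSpace.proj (𝕜 := ℝ) i).hasFDerivAt.comp y hF.hasFDerivAt).fderiv

lemma fderiv_fderiv_apply_apply {F : V → E k} (hF : ContDiff ℝ 2 F) (i : Fin k) (y a b : V) :
    fderiv ℝ (fderiv ℝ fun x => F x i) y a b = fderiv ℝ (fderiv ℝ F) y a b i := by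
  have hdF : Differentiable ℝ (fderiv ℝ F) :=
    (hF.fderiv_right (m := 1) (by norm_num)).differentiable one_ne_zero
  let compProj := ContinuousLinearMap.compL ℝ V (E k) ℝ (EuclideanSpace.proj i)
  have hfun : fderiv ℝ (fun x => F x i) = fun z => compProj (fderiv ℝ F z) :=
    funext fun z => fderiv_apply_eq_comp ((hF.differentiable (by norm_num)) z) i
  have hderiv : HasFDerivAt (fun z => compProj (fderiv ℝ F z))
      (compProj.comp (fderiv ℝ (fderiv ℝ F) y)) y :=
    compProj.hasFDerivAt.comp y (hdF y).hasFDerivAt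
  rw [hfun, hderiv.fderiv]
  rfl

lemma norm_fderiv_fderiv_le_sum {F : V → E k} (hF : ContDiff ℝ 2 F) (y : V) :
    ‖fderiv ℝ (fderiv ℝ F) y‖ ≤ ∑ i, ‖fderiv ℝ (fderiv ℝ fun x => F x i) y‖ := by
  refine ContinuousLinearMap.opNorm_le_bound₂ _ (by positivity) fun a b => ?_
  calc ‖fderiv ℝ (fderiv ℝ F) y a b‖ ≤ ∑ i, ‖fderiv ℝ (fderiv ℝ fun x => F x i) y a b‖ := by
        simpa only [fderiv_fderiv_apply_apply hF] using norm_le_sum_norm_apply _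
    _ ≤ ∑ i, ‖fderiv ℝ (fderiv ℝ fun x => F x i) y‖ * ‖a‖ * ‖b‖ :=
        Finset.sum_le_sum fun i _ => ContinuousLinearMap.le_opNorm₂ _ a b
    _ = (∑ i, ‖fderiv ℝ (fderiv ℝ fun x => F x i) y‖) * ‖a‖ * ‖b‖ := by
        rw [Finset.sum_mul, Finset.sum_mul]

end Components

section Bounds

variable {n m : ℕ} {S δ t : ℝ} {xs : ℝ → E n} {u : E n}

lemma norm_fderiv_fderiv_le_Mnc {fnc : E n → ℝ → E m} (hxs : ContinuousOn xs (Icc 0 S))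
    (hfnc : ∀ t ∈ Icc 0 S, ContDiff ℝ 2 fun x => fnc x t)
    (hHess : ∀ i : Fin m, ContinuousOn
      (fun p : E n × ℝ => fderiv ℝ (fderiv ℝ fun x => fnc x p.2 i) p.1) (univ ×ˢ Icc 0 S))
    (ht : t ∈ Icc 0 S) (hu : ‖u‖ ≤ δ) :
    ‖fderiv ℝ (fderiv ℝ fun x => fnc x t) (xs t + u)‖ ≤ Mnc S fnc xs δ := by
  have hK : IsCompact (Icc 0 S ×ˢ closedBall (0 : E n) δ) :=
    isCompact_Icc.prod (isCompact_closedBall 0 δ)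
  have hbound : ∀ i : Fin m, ∃ C, ∀ q ∈ Icc 0 S ×ˢ closedBall (0 : E n) δ,
      ‖fderiv ℝ (fderiv ℝ fun x => fnc x q.1 i) (xs q.1 + q.2)‖ ≤ C := fun i =>
    hK.exists_bound_of_continuousOn (E := E n →L[ℝ] E n →L[ℝ] ℝ) ((hHess i).comp
      (((hxs.comp continuousOn_fst fun q hq => (mem_prod.1 hq).1).add continuousOn_snd).prodMk
        continuousOn_fst) fun q hq => ⟨trivial, (mem_prod.1 hq).1⟩)
  choose C hC using hbound
  have hbdd : BddAbove (range fun p : {q : ℝ × E n // q.1 ∈ Icc 0 S ∧ ‖q.2‖ ≤ δ} =>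
      ‖fderiv ℝ (fderiv ℝ fun x => fnc x p.1.1) (xs p.1.1 + p.1.2)‖) := by
    refine ⟨∑ i, C i, ?_⟩
    rintro _ ⟨⟨q, hq, hqu⟩, rfl⟩
    exact (norm_fderiv_fderiv_le_sum (hfnc q.1 hq) _).trans
      (Finset.sum_le_sum fun i _ => hC i q ⟨hq, mem_closedBall_zero_iff.2 hqu⟩)
  exact le_ciSup hbdd ⟨(t, u), ht, hu⟩

lemma LambdaM_le_lambdaMin {c : E n → ℝ → ℝ} {fc fnc : E n → ℝ → E m} {ls : ℝ → E m}
    (hΛ : 0 < LambdaM S c fc fnc xs ls δ) (ht : t ∈ Icc 0 S) (hu : ‖u‖ ≤ δ) :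
    LambdaM S c fc fnc xs ls δ
      ≤ lambdaMin (HbarL c fnc xs ls u t + (2⁻¹ : ℝ) • ∑ i, ls t i • Hbarfc fc xs i u t) := by
  have hbdd : BddBelow (range fun p : {q : ℝ × E n // q.1 ∈ Icc 0 S ∧ ‖q.2‖ ≤ δ} =>
      lambdaMin (HbarL c fnc xs ls p.1.2 p.1.1
        + (2⁻¹ : ℝ) • ∑ i, ls p.1.1 i • Hbarfc fc xs i p.1.2 p.1.1)) := by
    by_contra hunbdd
    rw [LambdaM, Real.iInf_of_not_bddBelow hunbdd] at hΛ
    exact hΛ.false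
  exact ciInf_le hbdd ⟨(t, u), ht, hu⟩

end Bounds

lemma inner_HbarL_add_Hbarfc_apply {n m : ℕ} {c : E n → ℝ → ℝ} {fc fnc : E n → ℝ → E m}
    {xs : ℝ → E n} {ls : ℝ → E m} {t : ℝ} (hL : ContDiff ℝ 2 fun y => Lnc c fnc y (ls t) t)
    (hfc : ContDiff ℝ 2 fun y => fc y t) (u : E n) :
    ⟪(HbarL c fnc xs ls u t + (2⁻¹ : ℝ) • ∑ i, ls t i • Hbarfc fc xs i u t) u, u⟫
      = (fderiv ℝ (fun y => Lnc c fnc y (ls t) t) (xs t + u) u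
          - fderiv ℝ (fun y => Lnc c fnc y (ls t) t) (xs t) u)
        + ⟪ls t, fc (xs t + u) t - fc (xs t) t - fderiv ℝ (fun y => fc y t) (xs t) u⟫ := by
  rw [add_apply, inner_add_left, HbarL, inner_integral_hessOp_apply hL]
  congr 1
  rw [smul_apply, sum_apply, real_inner_smul_left, sum_inner, Finset.mul_sum]
  conv_rhs => rw [PiLp.inner_apply]
  refine Finset.sum_congr rfl fun i _ => ?_
  have hfci : ContDiff ℝ 2 fun y => fc y t i := (EuclideanSpace.proj (𝕜 := ℝ) i).contDiff.comp hfc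
  rw [smul_apply, real_inner_smul_left, Hbarfc, inner_integral_two_mul_smul_hessOp_apply hfci,
    fderiv_apply_eq_comp ((hfc.differentiable (by norm_num)) _)]
  simp only [ContinuousLinearMap.comp_apply, PiLp.proj_apply, PiLp.sub_apply, RCLike.inner_apply,
    Real.ringHom_apply]
  ring

section KKT

variable {n m : ℕ} (P : Problem n m) {t : ℝ}

/-- `kktPair P t z w = ⟪F z, w⟫` for the KKT operator `F (x, λ) = (∇ₓℒ(x, λ, t), -f(x, t))`. -/
def kktPair (t : ℝ) (z w : E n × E m) : ℝ :=
  ⟪gradient (fun y => P.c y t) z.1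
      + ContinuousLinearMap.adjoint (fderiv ℝ (fun y => P.f y t) z.1) z.2, w.1⟫
    - ⟪P.f z.1 t, w.2⟫

variable {P}

lemma kktPair_smul (z w : E n × E m) (a : ℝ) : kktPair P t z (a • w) = a * kktPair P t z w := by
  simp only [kktPair, Prod.smul_fst, Prod.smul_snd, real_inner_smul_right]
  ring

lemma kktPair_neg (z w : E n × E m) : kktPair P t z (-w) = -kktPair P t z w := by
  simpa using kktPair_smul z w (-1)

lemma IsKKT.kktPair_sub_nonneg {z z' : E n × E m} (h : IsKKT P t z.1 z.2)
    (hx : z'.1 ∈ P.X t) (hl : z'.2 ∈ orthant m) : 0 ≤ kktPair P t z (z' - z) := by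
  obtain ⟨-, -, hstat, hcompl⟩ := h
  have h₁ := hstat z'.1 hx
  have h₂ := hcompl z'.2 hl
  rw [inner_neg_left] at h₁
  simp only [kktPair, Prod.fst_sub, Prod.snd_sub]
  linarith

lemma kktPair_add_sub_kktPair (ht : t ∈ Icc 0 P.S) (x u : E n) (l d : E m) :
    kktPair P t ((x, l) + (u, d)) (u, d) - kktPair P t (x, l) (u, d)
      = (fderiv ℝ (fun y => Lnc P.c P.fnc y l t) (x + u) u
          - fderiv ℝ (fun y => Lnc P.c P.fnc y l t) x u)
        + ⟪l, P.fc (x + u) t - P.fc x t - fderiv ℝ (fun y => P.fc y t) x u⟫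
        + ⟪l + d, fderiv ℝ (fun y => P.fc y t) (x + u) u - (P.fc (x + u) t - P.fc x t)⟫
        + ⟪d, fderiv ℝ (fun y => P.fnc y t) (x + u) u - (P.fnc (x + u) t - P.fnc x t)⟫ := by
  have hc := (P.hc t ht).differentiable (by norm_num)
  have hfc := (P.hfc t ht).differentiable (by norm_num)
  have hfnc := (P.hfnc t ht).differentiable (by norm_num)
  have hf : ∀ y, fderiv ℝ (fun y => P.f y t) y
      = fderiv ℝ (fun y => P.fc y t) y + fderiv ℝ (fun y => P.fnc y t) y :=
    fun y => fderiv_fun_add (hfc y) (hfnc y)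
  have hL : ∀ y, fderiv ℝ (fun y => Lnc P.c P.fnc y l t) y u
      = fderiv ℝ (fun y => P.c y t) y u + ⟪l, fderiv ℝ (fun y => P.fnc y t) y u⟫ := by
    intro y
    have hderiv : HasFDerivAt (fun y => Lnc P.c P.fnc y l t)
        (fderiv ℝ (fun y => P.c y t) y + (innerSL ℝ l).comp (fderiv ℝ (fun y => P.fnc y t) y)) y :=
      (hc y).hasFDerivAt.add ((innerSL ℝ l).hasFDerivAt.comp y (hfnc y).hasFDerivAt)
    rw [hderiv.fderiv]
    rfl
  simp only [kktPair, Prod.mk_add_mk, hf, hL, inner_add_left, gradient,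
    InnerProductSpace.toDual_symm_apply, ContinuousLinearMap.adjoint_inner_left, add_apply]
  simp only [Problem.f, inner_add_right, inner_sub_right, real_inner_comm d]
  ring

end KKT

section Monotonicity

variable {n m : ℕ} {P : Problem n m} {xs : ℝ → E n} {ls : ℝ → E m} {δ t : ℝ}

lemma le_kktPair_add_sub_kktPair (hxs : ContinuousOn xs (Icc 0 P.S))
    (hΛ : 0 < LambdaM P.S P.c P.fc P.fnc xs ls δ) (ht : t ∈ Icc 0 P.S) {w : E n × E m}
    (hu : ‖w.1‖ ≤ δ) (hl : ls t + w.2 ∈ orthant m) :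
    (LambdaM P.S P.c P.fc P.fnc xs ls δ - ‖w.2‖ * Mnc P.S P.fnc xs δ / 2) * ‖w.1‖ ^ 2
      ≤ kktPair P t ((xs t, ls t) + w) w - kktPair P t (xs t, ls t) w := by
  obtain ⟨u, d⟩ := w
  dsimp only at hu hl ⊢
  rw [kktPair_add_sub_kktPair ht]
  have hL : ContDiff ℝ 2 fun y => Lnc P.c P.fnc y (ls t) t :=
    (P.hc t ht).add (contDiff_const.inner ℝ (P.hfnc t ht))
  have hquad := (mul_le_mul_of_nonneg_right (LambdaM_le_lambdaMin hΛ ht hu)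
    (sq_nonneg ‖u‖)).trans (lambdaMin_mul_norm_sq_le _ u)
  rw [inner_HbarL_add_Hbarfc_apply hL (P.hfc t ht)] at hquad
  have hconv : 0 ≤ ⟪ls t + d, fderiv ℝ (fun y => P.fc y t) (xs t + u) u
      - (P.fc (xs t + u) t - P.fc (xs t) t)⟫ := by
    refine inner_nonneg_of_mem_orthant hl fun i => ?_
    have hfci : Differentiable ℝ fun y => P.fc y t i :=
      ((EuclideanSpace.proj (𝕜 := ℝ) i).contDiff.comp (P.hfc t ht)).differentiable (by norm_num)
    have htangent := (P.hconv t ht i).add_fderiv_sub_le (mem_univ (xs t + u)) (mem_univ (xs t))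
      (hfci _)
    rw [sub_add_cancel_left, map_neg, fderiv_apply_eq_comp
      (((P.hfc t ht).differentiable (by norm_num)) _)] at htangent
    simp only [ContinuousLinearMap.comp_apply, PiLp.proj_apply] at htangent
    simp only [PiLp.sub_apply]
    linarith
  have hrem := norm_fderiv_apply_sub_sub_le (P.hfnc t ht) (xs t) u fun θ hθ =>
    norm_fderiv_fderiv_le_Mnc hxs P.hfnc P.hfncHess ht (δ := δ) (u := θ • u)
      (by rw [norm_smul, Real.norm_of_nonneg hθ.1]
          exact (mul_le_of_le_one_left (norm_nonneg u) hθ.2).trans hu)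
  have herr := (neg_le_neg ((abs_real_inner_le_norm d _).trans
    (mul_le_mul_of_nonneg_left hrem (norm_nonneg d)))).trans (neg_abs_le _)
  linarith

end Monotonicity

section Separation

variable {n m : ℕ} {P : Problem n m} {t η δ γ : ℝ}

lemma IsKKTTraj.continuousOn {xs : ℝ → E n} {ls : ℝ → E m} (h : IsKKTTraj P xs ls) :
    ContinuousOn xs (Icc 0 P.S) :=
  let ⟨⟨⟨_, hL⟩, _⟩, _⟩ := h
  continuous_fst.comp_continuousOn hL.continuousOn

def IsStronglyMonotoneNear (P : Problem n m) (t η δ γ : ℝ) (z : E n × E m) : Prop :=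
  ∀ w : E n × E m, ‖w.1‖ ≤ δ → ‖w.2‖ ≤ √η * δ → z.2 + w.2 ∈ orthant m →
    γ * ‖w.1‖ ^ 2 ≤ kktPair P t (z + w) w - kktPair P t z w

lemma isStronglyMonotoneNear_of_gap {xs : ℝ → E n} {ls : ℝ → E m}
    (hxs : ContinuousOn xs (Icc 0 P.S))
    (hgap : √η / 2 * δ * Mnc P.S P.fnc xs δ < LambdaM P.S P.c P.fc P.fnc xs ls δ)
    (ht : t ∈ Icc 0 P.S) :
    IsStronglyMonotoneNear P t η δ
      (LambdaM P.S P.c P.fc P.fnc xs ls δ - √η / 2 * δ * Mnc P.S P.fnc xs δ) (xs t, ls t) := by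
  intro w hu hd hl
  have hδ : 0 ≤ δ := (norm_nonneg _).trans hu
  have hM : 0 ≤ Mnc P.S P.fnc xs δ :=
    (ContinuousLinearMap.opNorm_nonneg _).trans (norm_fderiv_fderiv_le_Mnc hxs P.hfnc
      P.hfncHess ht (δ := δ) (u := 0) (by rwa [norm_zero]))
  have hΛ : 0 < LambdaM P.S P.c P.fc P.fnc xs ls δ := lt_of_le_of_lt (by positivity) hgap
  refine le_trans ?_ (le_kktPair_add_sub_kktPair hxs hΛ ht hu hl)
  gcongr
  linarith [mul_le_mul_of_nonneg_right hd hM]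

lemma IsStronglyMonotoneNear.le_kktPair_segment {z z' : E n × E m}
    (hm : IsStronglyMonotoneNear P t η δ γ z) (hη : 0 < η) (hz : z.2 ∈ orthant m)
    (hz' : z'.2 ∈ orthant m) {s : ℝ} (hs : s ∈ Ioc 0 1) (hsδ : s * etaNorm η (z' - z) ≤ δ) :
    γ * s * ‖(z' - z).1‖ ^ 2
      ≤ kktPair P t (z + s • (z' - z)) (z' - z) - kktPair P t z (z' - z) := by
  have h := hm (s • (z' - z))
    (by rw [Prod.smul_fst, norm_smul, Real.norm_of_nonneg hs.1.le]
        exact (mul_le_mul_of_nonneg_left (norm_fst_le_etaNorm hη.le _) hs.1.le).trans hsδ)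
    (by rw [Prod.smul_snd, norm_smul, Real.norm_of_nonneg hs.1.le]
        calc s * ‖(z' - z).2‖ ≤ s * (√η * etaNorm η (z' - z)) :=
              mul_le_mul_of_nonneg_left (norm_snd_le_sqrt_mul_etaNorm hη _) hs.1.le
          _ = √η * (s * etaNorm η (z' - z)) := by ring
          _ ≤ √η * δ := mul_le_mul_of_nonneg_left hsδ (Real.sqrt_nonneg η))
    ((convex_orthant m).add_smul_sub_mem hz hz' (Ioc_subset_Icc_self hs))
  rw [kktPair_smul, kktPair_smul, Prod.smul_fst, norm_smul, Real.norm_of_nonneg hs.1.le] at h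
  exact le_of_mul_le_mul_left (by linear_combination h) hs.1

lemma lt_etaNorm_sub_of_isStronglyMonotoneNear {z₁ z₂ : E n × E m} {δ₁ δ₂ γ₁ γ₂ : ℝ}
    (h₁ : IsKKT P t z₁.1 z₁.2) (h₂ : IsKKT P t z₂.1 z₂.2) (hη : 0 < η) (hδ₁ : 0 < δ₁)
    (hδ₂ : 0 < δ₂) (hγ₁ : 0 < γ₁) (hγ₂ : 0 < γ₂)
    (hm₁ : IsStronglyMonotoneNear P t η δ₁ γ₁ z₁) (hm₂ : IsStronglyMonotoneNear P t η δ₂ γ₂ z₂)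
    (hne : z₁.1 ≠ z₂.1) :
    δ₁ + δ₂ < etaNorm η (z₁ - z₂) := by
  by_contra! hle
  set τ := δ₁ / (δ₁ + δ₂)
  have hτ : τ * (δ₁ + δ₂) = δ₁ := div_mul_cancel₀ _ (by positivity)
  have hτ₀ : 0 < τ := by positivity
  have hτ₁ : τ < 1 := (div_lt_one (by positivity)).2 (by linarith)
  have hseg₁ := hm₁.le_kktPair_segment hη h₁.2.1 h₂.2.1 (s := τ) ⟨hτ₀, hτ₁.le⟩
    ((mul_le_mul_of_nonneg_left (etaNorm_sub_comm η z₁ z₂ ▸ hle) hτ₀.le).trans_eq hτ)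
  have hseg₂ := hm₂.le_kktPair_segment hη h₂.2.1 h₁.2.1 (s := 1 - τ) ⟨by linarith, by linarith⟩
    ((mul_le_mul_of_nonneg_left hle (by linarith)).trans_eq (by linarith))
  have hmid : z₂ + (1 - τ) • (z₁ - z₂) = z₁ + τ • (z₂ - z₁) := by module
  rw [hmid, ← neg_sub z₂ z₁, Prod.fst_neg, norm_neg] at hseg₂
  simp only [kktPair_neg] at hseg₂
  have hvi₁ := h₁.kktPair_sub_nonneg h₂.1 h₂.2.1
  have hvi₂ := h₂.kktPair_sub_nonneg h₁.1 h₁.2.1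
  rw [← neg_sub z₂ z₁, kktPair_neg] at hvi₂
  have hq : 0 < ‖(z₂ - z₁).1‖ ^ 2 := pow_pos (norm_pos_iff.2 (sub_ne_zero.2 hne.symm)) 2
  linarith [mul_pos (mul_pos hγ₁ hτ₀) hq, mul_pos (mul_pos hγ₂ (sub_pos.2 hτ₁)) hq]

end Separation

/-- **separation of distinct KKT trajectories.** If `z*_{(1)}` and
`z*_{(2)}` are Lipschitz KKT trajectories with
`Λ_m^{(i)}(δ_i) − (√η/2) δ_i M_nc^{(i)}(δ_i) > 0` for `i = 1,2`, and
`x*_{(1)}(t) ≠ x*_{(2)}(t)` for some `t ∈ [0,S]`, then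
`‖z*_{(1)}(t) − z*_{(2)}(t)‖_η > δ₁ + δ₂`. -/
theorem separation_of_KKT_trajectories {n m : ℕ} (P : Problem n m)
    (x1 : ℝ → E n) (l1 : ℝ → E m) (x2 : ℝ → E n) (l2 : ℝ → E m)
    (h1 : IsKKTTraj P x1 l1) (h2 : IsKKTTraj P x2 l2)
    (δ1 δ2 η : ℝ) (hδ1 : 0 < δ1) (hδ2 : 0 < δ2) (hη : 0 < η)
    (hgap1 : Real.sqrt η / 2 * δ1 * Mnc P.S P.fnc x1 δ1
      < LambdaM P.S P.c P.fc P.fnc x1 l1 δ1)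
    (hgap2 : Real.sqrt η / 2 * δ2 * Mnc P.S P.fnc x2 δ2
      < LambdaM P.S P.c P.fc P.fnc x2 l2 δ2)
    (t : ℝ) (ht : t ∈ Icc (0:ℝ) P.S) (hx : x1 t ≠ x2 t) :
    δ1 + δ2 < etaNorm η ((x1 t, l1 t) - (x2 t, l2 t)) :=
  lt_etaNorm_sub_of_isStronglyMonotoneNear (h1.2 t ht) (h2.2 t ht) hη hδ1 hδ2
    (sub_pos.2 hgap1) (sub_pos.2 hgap2)
    (isStronglyMonotoneNear_of_gap h1.continuousOn hgap1 ht)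
    (isStronglyMonotoneNear_of_gap h2.continuousOn hgap2 ht) hx

end TVOpt
end
end
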